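/- arXiv:1401.2978 — 2 statements merged into one kernel-verified Lean document; each statement's English description precedes it below -/
import Mathlib

section
/- For any scheduling problem S on n items (a boolean formula over atomic formulas x_i ≤ x_j), the counting function χ_S(k), which counts the number of vectors a ∈ [k]^n satisfying S, is a polynomial in k of degree at most n. -/
/-- A scheduling problem on `n` items: a boolean formula over atoms `x i ≤ x j`. -/
inductive SForm (n : ℕ) : Type
  | atom (i j : Fin n) : SForm n
  | not (φ : SForm n) : SForm n
  | and (φ ψ : SForm n) : SForm n
  | or (φ ψ : SForm n) : SForm n

/-- Evaluation of a scheduling formula at an assignment `a : Fin n → ℕ`. -/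
def SForm.eval {n : ℕ} : SForm n → (Fin n → ℕ) → Bool
  | .atom i j, a => decide (a i ≤ a j)
  | .not φ, a => !(φ.eval a)
  | .and φ ψ, a => φ.eval a && ψ.eval a
  | .or φ ψ, a => φ.eval a || ψ.eval a

/-- `schedCount S k` = number of vectors `a ∈ [k]^n` (entries in `{1,…,k}`) solving `S`. -/
def schedCount {n : ℕ} (S : SForm n) (k : ℕ) : ℕ :=
  ((Fintype.piFinset fun _ : Fin n => Finset.Icc 1 k).filter
    fun a => S.eval a = true).card

/-- An ordered set partition of `[n]`. -/
structure OSP (n : ℕ) where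
  blocks : List (Finset (Fin n))
  nonempty : ∀ B ∈ blocks, B.Nonempty
  pairwiseDisjoint : blocks.Pairwise Disjoint
  cover : ∀ i : Fin n, ∃ B ∈ blocks, i ∈ B

/-- Number of blocks of an ordered set partition. -/
def OSP.length {n : ℕ} (Φ : OSP n) : ℕ := Φ.blocks.length

/-- `Φ.delta a` : the order class of `a` is `Φ`, i.e. coordinates of `a` are constant on each
block and ordered according to the block order. -/
def OSP.delta {n : ℕ} (Φ : OSP n) (a : Fin n → ℕ) : Prop :=
  ∃ idx : Fin n → Fin Φ.blocks.length,
    (∀ i, i ∈ Φ.blocks.get (idx i)) ∧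
    (∀ i j, a i ≤ a j ↔ (idx i : ℕ) ≤ (idx j : ℕ))

/-- An ordered set partition `Φ` solves `S` if every vector with order class `Φ` satisfies `S`. -/
def OSP.solves {n : ℕ} (Φ : OSP n) (S : SForm n) : Prop :=
  ∀ a : Fin n → ℕ, Φ.delta a → S.eval a = true

/-- `Ψ.refines Φ` : `Φ` is obtained from `Ψ` by merging consecutive blocks. -/
def OSP.refines {n : ℕ} (Ψ Φ : OSP n) : Prop :=
  ∃ g : Fin Ψ.blocks.length → Fin Φ.blocks.length,
    Monotone g ∧
    ∀ l : Fin Φ.blocks.length,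
      Φ.blocks.get l =
        (Finset.univ.filter fun m => g m = l).biUnion fun m => Ψ.blocks.get m

/-- One step of directed refinement: `F` is obtained from `C` by splitting one block into two
adjacent blocks, every element of the first being less than every element of the second. -/
def dirCov {n : ℕ} (C F : OSP n) : Prop :=
  ∃ (L R : List (Finset (Fin n))) (B₁ B₂ : Finset (Fin n)),
    F.blocks = L ++ B₁ :: B₂ :: R ∧
    C.blocks = L ++ (B₁ ∪ B₂) :: R ∧
    ∀ x ∈ B₁, ∀ y ∈ B₂, x < y

/-- `dirRef C F` : `F` is a directed refinement of `C` (`C ⪯ F`). -/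
def dirRef {n : ℕ} : OSP n → OSP n → Prop := Relation.ReflTransGen dirCov

namespace SchedAux
open Finset

/-- rank function of a vector: number of distinct values strictly below `a i`. -/
def rk {n : ℕ} (a : Fin n → ℕ) (i : Fin n) : ℕ :=
  ((Finset.image a Finset.univ).filter (fun v => v < a i)).card

lemma rankFn_lt {I : Finset ℕ} {v w : ℕ} (hv : v ∈ I) (hvw : v < w) :
    (I.filter (fun x => x < v)).card < (I.filter (fun x => x < w)).card := by
  apply Finset.card_lt_card
  have hsub : I.filter (fun x => x < v) ⊆ I.filter (fun x => x < w) := by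
    intro x hx; simp only [mem_filter] at *; exact ⟨hx.1, hx.2.trans hvw⟩
  refine (Finset.ssubset_iff_of_subset hsub).mpr ⟨v, ?_, ?_⟩
  · exact mem_filter.mpr ⟨hv, hvw⟩
  · simp

lemma rankFn_injOn {I : Finset ℕ} {v w : ℕ} (hv : v ∈ I) (hw : w ∈ I)
    (h : (I.filter (fun x => x < v)).card = (I.filter (fun x => x < w)).card) : v = w := by
  rcases lt_trichotomy v w with hlt | he | hgt
  · exact absurd h (rankFn_lt hv hlt).ne
  · exact he
  · exact absurd h.symm (rankFn_lt hw hgt).ne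

lemma rk_le_iff {n : ℕ} (a : Fin n → ℕ) (i j : Fin n) :
    rk a i ≤ rk a j ↔ a i ≤ a j := by
  constructor
  · intro h
    by_contra hc
    push_neg at hc
    exact absurd h (not_le.mpr (rankFn_lt (Finset.mem_image_of_mem a (mem_univ j)) hc))
  · intro h
    apply Finset.card_le_card
    intro x hx; simp only [mem_filter] at *; exact ⟨hx.1, lt_of_lt_of_le hx.2 h⟩

lemma image_rk {n : ℕ} (a : Fin n → ℕ) :
    Finset.image (rk a) Finset.univ = Finset.range ((Finset.image a Finset.univ).card) := by
  set I := Finset.image a Finset.univ with hI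
  have h1 : Finset.image (rk a) Finset.univ
      = Finset.image (fun v => (I.filter (fun x => x < v)).card) I := by
    rw [hI, Finset.image_image]
    rfl
  rw [h1]
  apply Finset.eq_of_subset_of_card_le
  · intro x hx
    simp only [Finset.mem_image] at hx
    obtain ⟨v, hv, rfl⟩ := hx
    rw [Finset.mem_range]
    apply Finset.card_lt_card
    refine (Finset.ssubset_iff_of_subset (Finset.filter_subset _ _)).mpr ⟨v, hv, ?_⟩
    simp
  · rw [Finset.card_range]
    refine le_of_eq (Finset.card_image_of_injOn ?_).symm
    intro v hv w hw h
    exact rankFn_injOn hv hw h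

lemma rk_mem_range {n : ℕ} (a : Fin n → ℕ) (i : Fin n) :
    rk a i ∈ Finset.range ((Finset.image a Finset.univ).card) := by
  rw [← image_rk]
  exact Finset.mem_image_of_mem _ (mem_univ i)

lemma card_image_rk {n : ℕ} (a : Fin n → ℕ) :
    (Finset.image (rk a) Finset.univ).card = (Finset.image a Finset.univ).card := by
  rw [image_rk, Finset.card_range]

lemma rk_idem {n : ℕ} (a : Fin n → ℕ) : rk (rk a) = rk a := by
  funext i
  have hm : rk a i < (Finset.image a Finset.univ).card :=
    Finset.mem_range.mp (rk_mem_range a i)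
  have h2 : rk (rk a) i
      = ((Finset.image (rk a) Finset.univ).filter (fun v => v < rk a i)).card := rfl
  rw [h2, image_rk a]
  have : (Finset.range ((Finset.image a Finset.univ).card)).filter (fun v => v < rk a i)
      = Finset.range (rk a i) := by
    ext x
    simp only [Finset.mem_filter, Finset.mem_range]
    omega
  rw [this, Finset.card_range]

lemma fiber_card {n : ℕ} (k : ℕ) (r : Fin n → ℕ) (hr : rk r = r) :
    ((Fintype.piFinset fun _ : Fin n => Finset.Icc 1 k).filter fun a => rk a = r).card
      = k.choose ((Finset.image r Finset.univ).card) := by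
  set m := (Finset.image r Finset.univ).card with hm
  have himr : Finset.image r Finset.univ = Finset.range m := by
    conv_lhs => rw [← hr]
    rw [image_rk r]
  have hcard : ((Finset.Icc 1 k).powersetCard m).card = k.choose m := by
    rw [Finset.card_powersetCard, Nat.card_Icc]; norm_num
  rw [← hcard]
  apply Finset.card_bij (i := fun a _ => Finset.image a Finset.univ)
  · -- maps into target
    intro a ha
    rw [Finset.mem_filter] at ha
    obtain ⟨ha1, ha2⟩ := ha
    rw [Finset.mem_powersetCard]
    constructor
    · intro v hv
      simp only [Finset.mem_image] at hv
      obtain ⟨i, _, rfl⟩ := hv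
      exact Fintype.mem_piFinset.mp ha1 i
    · rw [← card_image_rk a, ha2]
  · -- injective
    intro a ha b hb hab
    rw [Finset.mem_filter] at ha hb
    funext i
    have hai : a i ∈ Finset.image a Finset.univ := Finset.mem_image_of_mem a (Finset.mem_univ i)
    have hbi : b i ∈ Finset.image a Finset.univ := by
      rw [hab]; exact Finset.mem_image_of_mem b (Finset.mem_univ i)
    apply rankFn_injOn hai hbi
    have h1 : ((Finset.image a Finset.univ).filter (fun x => x < a i)).card = r i := by
      have := congrFun ha.2 i; exact this
    have h2 : ((Finset.image a Finset.univ).filter (fun x => x < b i)).card = r i := by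
      rw [hab]
      have := congrFun hb.2 i; exact this
    rw [h1, h2]
  · -- surjective
    intro T hT
    rw [Finset.mem_powersetCard] at hT
    obtain ⟨hT1, hT2⟩ := hT
    have hri : ∀ i : Fin n, r i < m := by
      intro i
      have : r i ∈ Finset.image r Finset.univ := Finset.mem_image_of_mem r (Finset.mem_univ i)
      rw [himr, Finset.mem_range] at this
      exact this
    set e := T.orderIsoOfFin hT2 with he
    set a : Fin n → ℕ := fun i => (e ⟨r i, hri i⟩ : ℕ) with haa
    have haT : ∀ i, a i ∈ T := fun i => (e ⟨r i, hri i⟩).2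
    have himg : Finset.image a Finset.univ = T := by
      apply Finset.Subset.antisymm
      · intro v hv
        simp only [Finset.mem_image] at hv
        obtain ⟨i, _, rfl⟩ := hv
        exact haT i
      · intro t ht
        obtain ⟨l, hl⟩ := e.surjective ⟨t, ht⟩
        have hlm : (l : ℕ) ∈ Finset.image r Finset.univ := by
          rw [himr, Finset.mem_range]; exact l.2
        simp only [Finset.mem_image] at hlm
        obtain ⟨i, _, hi⟩ := hlm
        rw [Finset.mem_image]
        refine ⟨i, Finset.mem_univ i, ?_⟩
        have : (⟨r i, hri i⟩ : Fin m) = l := Fin.ext hi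
        rw [haa]
        simp only [this, hl]
    refine ⟨a, ?_, himg⟩
    rw [Finset.mem_filter]
    constructor
    · rw [Fintype.mem_piFinset]
      intro i
      exact hT1 (haT i)
    · funext i
      have h0 : rk a i = (T.filter (fun x => x < a i)).card := by
        unfold rk; rw [himg]
      rw [h0]
      have hfe : T.filter (fun x => x < a i)
          = Finset.image (fun l : Fin m => (e l : ℕ))
              (Finset.univ.filter (fun l : Fin m => l < ⟨r i, hri i⟩)) := by
        ext t
        simp only [Finset.mem_filter, Finset.mem_image, Finset.mem_univ, true_and]
        constructor
        · rintro ⟨ht, hlt⟩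
          obtain ⟨l, hl⟩ := e.surjective ⟨t, ht⟩
          refine ⟨l, ?_, by rw [hl]⟩
          rw [← e.lt_iff_lt, hl]
          exact Subtype.coe_lt_coe.mp (by simpa [haa] using hlt)
        · rintro ⟨l, hlt, rfl⟩
          refine ⟨(e l).2, ?_⟩
          rw [haa]
          exact Subtype.coe_lt_coe.mpr (e.lt_iff_lt.mpr hlt)
      rw [hfe, Finset.card_image_of_injective _ (fun x y hxy => e.injective (Subtype.ext hxy))]
      have : (Finset.univ.filter (fun l : Fin m => l < ⟨r i, hri i⟩)) = Finset.Iio ⟨r i, hri i⟩ := by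
        ext l; simp
      rw [this, Fin.card_Iio]


lemma eval_congr {n : ℕ} (S : SForm n) (a b : Fin n → ℕ)
    (h : ∀ i j, a i ≤ a j ↔ b i ≤ b j) : S.eval a = S.eval b := by
  induction S with
  | atom i j => simp only [SForm.eval]; exact decide_eq_decide.mpr (h i j)
  | not φ ih => simp [SForm.eval, ih]
  | and φ ψ ih1 ih2 => simp [SForm.eval, ih1, ih2]
  | or φ ψ ih1 ih2 => simp [SForm.eval, ih1, ih2]

lemma eval_rk {n : ℕ} (S : SForm n) (a : Fin n → ℕ) : S.eval a = S.eval (rk a) :=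
  eval_congr S a (rk a) (fun i j => (rk_le_iff a i j).symm)

end SchedAux

open SchedAux Finset in

/-- the scheduling counting function is a polynomial in `k` of degree at most `n`. -/
theorem schedCount_isPolynomial {n : ℕ} (S : SForm n) :
    ∃ p : Polynomial ℚ, p.degree ≤ n ∧
      ∀ k : ℕ, 1 ≤ k → p.eval (k : ℚ) = schedCount S k := by
  classical
  set R : Finset (Fin n → ℕ) := Fintype.piFinset fun _ : Fin n => Finset.range (n + 1) with hR
  set R' : Finset (Fin n → ℕ) := R.filter (fun r => S.eval r = true ∧ rk r = r) with hR'
  set mr : (Fin n → ℕ) → ℕ := fun r => (Finset.image r Finset.univ).card with hmr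
  have hmr_le : ∀ r : Fin n → ℕ, mr r ≤ n := by
    intro r
    calc mr r ≤ (Finset.univ : Finset (Fin n)).card := Finset.card_image_le
    _ = n := by simp
  have key : ∀ k : ℕ, schedCount S k = ∑ r ∈ R', k.choose (mr r) := by
    intro k
    unfold schedCount
    have hmem : ∀ a ∈ (Fintype.piFinset fun _ : Fin n => Finset.Icc 1 k).filter
        (fun a => S.eval a = true), rk a ∈ R := by
      intro a _
      rw [hR, Fintype.mem_piFinset]
      intro i
      rw [Finset.mem_range]
      have h1 := Finset.mem_range.mp (rk_mem_range a i)
      have h2 : (Finset.image a Finset.univ).card ≤ n :=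
        le_trans Finset.card_image_le (by simp)
      omega
    rw [Finset.card_eq_sum_card_fiberwise hmem, Finset.sum_filter]
    apply Finset.sum_congr rfl
    intro r hrR
    rw [Finset.filter_filter]
    by_cases h : S.eval r = true ∧ rk r = r
    · rw [if_pos h, ← fiber_card k r h.2]
      congr 1
      apply Finset.filter_congr
      intro a _
      constructor
      · exact fun hx => hx.2
      · intro hx
        refine ⟨?_, hx⟩
        rw [eval_rk S a, hx]
        exact h.1
    · rw [if_neg h, Finset.card_eq_zero, Finset.filter_eq_empty_iff]
      rintro a _ ⟨he, hrk⟩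
      apply h
      refine ⟨?_, ?_⟩
      · rw [← hrk, ← eval_rk]
        exact he
      · rw [← hrk, rk_idem]
  refine ⟨∑ r ∈ R', Polynomial.C ((Nat.factorial (mr r) : ℚ)⁻¹) * descPochhammer ℚ (mr r),
    ?_, ?_⟩
  · refine (Polynomial.degree_sum_le _ _).trans ?_
    rw [Finset.sup_le_iff]
    intro r _
    refine (Polynomial.degree_mul_le _ _).trans ?_
    have h1 : (Polynomial.C ((Nat.factorial (mr r) : ℚ)⁻¹)).degree ≤ 0 := Polynomial.degree_C_le
    have h2 : (descPochhammer ℚ (mr r)).degree ≤ (n : WithBot ℕ) := by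
      refine (Polynomial.degree_le_natDegree).trans ?_
      rw [descPochhammer_natDegree]
      exact_mod_cast hmr_le r
    calc (Polynomial.C ((Nat.factorial (mr r) : ℚ)⁻¹)).degree
        + (descPochhammer ℚ (mr r)).degree ≤ 0 + (n : WithBot ℕ) := add_le_add h1 h2
    _ = (n : WithBot ℕ) := zero_add _
  · intro k _
    rw [key k, Nat.cast_sum, Polynomial.eval_finset_sum]
    apply Finset.sum_congr rfl
    intro r _
    rw [Polynomial.eval_mul, Polynomial.eval_C, descPochhammer_eval_eq_descFactorial]
    have hd : ((k.descFactorial (mr r) : ℕ) : ℚ)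
        = (Nat.factorial (mr r) : ℚ) * (k.choose (mr r) : ℚ) := by
      rw [Nat.descFactorial_eq_factorial_mul_choose]
      push_cast
      ring
    rw [hd, ← mul_assoc, inv_mul_cancel₀ (Nat.cast_ne_zero.mpr (Nat.factorial_ne_zero _)),
      one_mul]
end

section
/- For any scheduling problem S on n items, χ_S(k) = Σ_{i=1}^n f_i · C(k,i), where f_i is the number of ordered set partitions Φ of [n] with exactly i non-empty blocks such that every vector a with Δ(a) = Φ solves S. In particular the coefficients f_i are non-negative integers. -/
/-!
Every `a : Fin n → ℕ` has exactly one order class `Δ(a)`, and whether `a` solves `S` depends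
only on `Δ(a)`. Hence `χ_S(k)` is the sum, over the ordered set partitions `Φ` solving `S`, of the
number of `a ∈ [k]^n` with `Δ(a) = Φ`. Such an `a` is `e ∘ idx` for the block index map `idx` of
`Φ` and a strictly increasing `e`, so it is determined by its set of values, which can be any
`Φ.length`-element subset of `[k]`: there are `C(k, Φ.length)` of them.
-/

open Finset

lemma SForm.eval_congr {n : ℕ} (S : SForm n) {a b : Fin n → ℕ}
    (h : ∀ i j, a i ≤ a j ↔ b i ≤ b j) : S.eval a = S.eval b := by
  induction S with
  | atom i j => exact decide_eq_decide.mpr (h i j)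
  | not φ ih => simp only [SForm.eval, ih]
  | and φ ψ ih₁ ih₂ => simp only [SForm.eval, ih₁, ih₂]
  | or φ ψ ih₁ ih₂ => simp only [SForm.eval, ih₁, ih₂]

instance SForm.isEmpty_zero : IsEmpty (SForm 0) :=
  ⟨fun S => by induction S with
    | atom i => exact i.elim0
    | _ => assumption⟩

namespace OSP

variable {n : ℕ}

theorem ext_blocks {Φ Ψ : OSP n} (h : Φ.blocks = Ψ.blocks) : Φ = Ψ := by
  cases Φ; cases Ψ; cases h; rfl

section blockIdx

variable (Φ : OSP n)

lemma disjoint_get {l m : Fin Φ.blocks.length} (h : l ≠ m) :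
    Disjoint (Φ.blocks.get l) (Φ.blocks.get m) := by
  rcases h.lt_or_gt with h | h
  · exact List.pairwise_iff_get.mp Φ.pairwiseDisjoint l m h
  · exact (List.pairwise_iff_get.mp Φ.pairwiseDisjoint m l h).symm

lemma exists_mem_get (i : Fin n) : ∃ l, i ∈ Φ.blocks.get l := by
  obtain ⟨B, hB, hiB⟩ := Φ.cover i
  obtain ⟨l, rfl⟩ := List.mem_iff_get.mp hB
  exact ⟨l, hiB⟩

noncomputable def blockIdx (i : Fin n) : Fin Φ.blocks.length :=
  (Φ.exists_mem_get i).choose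

lemma blockIdx_eq_iff {i : Fin n} {l : Fin Φ.blocks.length} :
    Φ.blockIdx i = l ↔ i ∈ Φ.blocks.get l := by
  have hi : i ∈ Φ.blocks.get (Φ.blockIdx i) := (Φ.exists_mem_get i).choose_spec
  refine ⟨fun h => h ▸ hi, fun h => ?_⟩
  by_contra hne
  exact disjoint_left.mp (Φ.disjoint_get hne) hi h

lemma mem_get_blockIdx (i : Fin n) : i ∈ Φ.blocks.get (Φ.blockIdx i) :=
  Φ.blockIdx_eq_iff.mp rfl

lemma blockIdx_surjective : Function.Surjective Φ.blockIdx := fun l =>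
  let ⟨i, hi⟩ := Φ.nonempty _ (List.get_mem _ l)
  ⟨i, Φ.blockIdx_eq_iff.mpr hi⟩

lemma length_le : Φ.length ≤ n := by
  simpa [OSP.length] using Fintype.card_le_of_surjective _ Φ.blockIdx_surjective

lemma length_mem_Icc (hn : 0 < n) : Φ.length ∈ Icc 1 n :=
  mem_Icc.mpr ⟨(Φ.blockIdx ⟨0, hn⟩).pos, Φ.length_le⟩

lemma image_univ_comp_blockIdx {α : Type*} [DecidableEq α] (e : Fin Φ.blocks.length → α) :
    univ.image (e ∘ Φ.blockIdx) = univ.image e := by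
  rw [← image_image, image_univ_of_surjective Φ.blockIdx_surjective]

end blockIdx

instance : Finite (OSP n) :=
  have := (List.finite_length_le (Finset (Fin n)) n).to_subtype
  Finite.of_injective (β := {l : List (Finset (Fin n)) | l.length ≤ n})
    (fun Φ => ⟨Φ.blocks, Φ.length_le⟩) fun _ _ h => ext_blocks (congrArg Subtype.val h)

noncomputable instance : Fintype (OSP n) := Fintype.ofFinite _

section delta

variable (Φ : OSP n) {a : Fin n → ℕ}

lemma delta_iff : Φ.delta a ↔ ∀ i j, a i ≤ a j ↔ Φ.blockIdx i ≤ Φ.blockIdx j := by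
  refine ⟨fun ⟨f, hf, ho⟩ i j => ?_, fun h => ⟨Φ.blockIdx, Φ.mem_get_blockIdx, h⟩⟩
  rw [ho, Φ.blockIdx_eq_iff.mpr (hf i), Φ.blockIdx_eq_iff.mpr (hf j), Fin.le_iff_val_le_val]

lemma delta_iff_exists_strictMono :
    Φ.delta a ↔ ∃ e : Fin Φ.blocks.length → ℕ, StrictMono e ∧ a = e ∘ Φ.blockIdx := by
  rw [delta_iff]
  refine ⟨fun h => ?_, fun ⟨e, he, hae⟩ i j => hae ▸ he.le_iff_le⟩
  set r := Function.surjInv Φ.blockIdx_surjective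
  have hr : ∀ l, Φ.blockIdx (r l) = l := Function.surjInv_eq Φ.blockIdx_surjective
  refine ⟨a ∘ r, fun l m hlm => ?_, funext fun j => ?_⟩
  · exact (lt_iff_lt_of_le_iff_le (h (r m) (r l))).mpr (by rwa [hr, hr])
  · exact le_antisymm ((h _ _).mpr (by rw [hr])) ((h _ _).mpr (by rw [hr]))

lemma delta_comp_blockIdx {e : Fin Φ.blocks.length → ℕ} (he : StrictMono e) :
    Φ.delta (e ∘ Φ.blockIdx) :=
  Φ.delta_iff_exists_strictMono.mpr ⟨e, he, rfl⟩

lemma card_image_of_delta (h : Φ.delta a) : #(univ.image a) = Φ.blocks.length := by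
  obtain ⟨e, he, rfl⟩ := Φ.delta_iff_exists_strictMono.mp h
  rw [image_univ_comp_blockIdx, card_image_of_injective _ he.injective, card_univ,
    Fintype.card_fin]

lemma eq_orderEmbOfFin_comp_of_delta (h : Φ.delta a) :
    a = (univ.image a).orderEmbOfFin (Φ.card_image_of_delta h) ∘ Φ.blockIdx := by
  obtain ⟨e, he, rfl⟩ := Φ.delta_iff_exists_strictMono.mp h
  refine congrArg (· ∘ Φ.blockIdx) (orderEmbOfFin_unique _ (fun l => ?_) he)
  rw [image_univ_comp_blockIdx]
  exact mem_image_of_mem e (mem_univ l)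

end delta

theorem eq_of_delta {Φ Ψ : OSP n} {a : Fin n → ℕ} (hΦ : Φ.delta a) (hΨ : Ψ.delta a) :
    Φ = Ψ := by
  have hidx (j : Fin n) : (Φ.blockIdx j : ℕ) = Ψ.blockIdx j := by
    refine (orderEmbOfFin_eq_orderEmbOfFin_iff (h := Φ.card_image_of_delta hΦ)
      (h' := Ψ.card_image_of_delta hΨ)).mp ?_
    exact (congrFun (Φ.eq_orderEmbOfFin_comp_of_delta hΦ) j).symm.trans
      (congrFun (Ψ.eq_orderEmbOfFin_comp_of_delta hΨ) j)
  refine ext_blocks <| List.ext_get ((Φ.card_image_of_delta hΦ).symm.trans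
    (Ψ.card_image_of_delta hΨ)) fun l h₁ h₂ => ?_
  ext i
  rw [← blockIdx_eq_iff, ← blockIdx_eq_iff, Fin.ext_iff, Fin.ext_iff, hidx]

theorem exists_delta (a : Fin n → ℕ) : ∃ Φ : OSP n, Φ.delta a := by
  set s := univ.image a
  have has (i : Fin n) : a i ∈ s := mem_image_of_mem a (mem_univ i)
  let r (i : Fin n) : Fin s.card := (s.orderIsoOfFin rfl).symm ⟨a i, has i⟩
  have hr (i : Fin n) : s.orderEmbOfFin rfl (r i) = a i := by
    rw [← coe_orderIsoOfFin_apply, OrderIso.apply_symm_apply]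
  let B (m : Fin s.card) : Finset (Fin n) := univ.filter (r · = m)
  refine ⟨⟨List.ofFn B, ?_, ?_, ?_⟩, fun i => Fin.cast List.length_ofFn.symm (r i), ?_, ?_⟩
  · simp only [List.mem_ofFn, forall_exists_index]
    rintro _ m rfl
    obtain ⟨i, -, hi⟩ := mem_image.mp (s.orderEmbOfFin_mem rfl m)
    exact ⟨i, by simpa [B] using (s.orderEmbOfFin rfl).injective ((hr i).trans hi)⟩
  · exact List.pairwise_ofFn.mpr fun m m' hmm' =>
      disjoint_filter.mpr fun i _ hm hm' => hmm'.ne (hm.symm.trans hm')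
  · exact fun i => ⟨B (r i), List.mem_ofFn.mpr ⟨r i, rfl⟩, by simp [B]⟩
  · simp [B]
  · intro i j
    rw [← hr i, ← hr j, OrderEmbedding.le_iff_le]
    rfl

lemma solves_iff_eval {Φ : OSP n} {S : SForm n} {a : Fin n → ℕ} (h : Φ.delta a) :
    Φ.solves S ↔ S.eval a = true := by
  refine ⟨fun hS => hS a h, fun hS b hb => ?_⟩
  rwa [S.eval_congr fun i j => (Φ.delta_iff.mp hb i j).trans (Φ.delta_iff.mp h i j).symm]

theorem card_filter_delta (Φ : OSP n) (t : Finset ℕ) [DecidablePred Φ.delta] :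
    #{a ∈ Fintype.piFinset (fun _ : Fin n => t) | Φ.delta a} = t.card.choose Φ.length := by
  change _ = t.card.choose Φ.blocks.length
  rw [← card_powersetCard]
  refine card_bij' (fun a _ => univ.image a)
    (fun u hu => u.orderEmbOfFin (mem_powersetCard.mp hu).2 ∘ Φ.blockIdx) ?_ ?_ ?_ ?_
  · intro a ha
    rw [mem_filter, Fintype.mem_piFinset] at ha
    exact mem_powersetCard.mpr
      ⟨image_subset_iff.mpr fun i _ => ha.1 i, Φ.card_image_of_delta ha.2⟩
  · intro u hu
    refine mem_filter.mpr ⟨Fintype.mem_piFinset.mpr fun i => ?_,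
      Φ.delta_comp_blockIdx (orderEmbOfFin _ _).strictMono⟩
    exact (mem_powersetCard.mp hu).1 (orderEmbOfFin_mem _ _ _)
  · intro a ha
    exact (Φ.eq_orderEmbOfFin_comp_of_delta (mem_filter.mp ha).2).symm
  · intro u hu
    rw [image_univ_comp_blockIdx, image_orderEmbOfFin_univ]

open scoped Classical in
theorem card_filter_eval_eq_sum (S : SForm n) (s : Finset (Fin n → ℕ)) :
    #{a ∈ s | S.eval a = true} = ∑ Φ : OSP n with Φ.solves S, #{a ∈ s | Φ.delta a} := by
  rw [← card_biUnion (t := fun Φ => {a ∈ s | Φ.delta a}) fun Φ _ Ψ _ hne =>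
    disjoint_filter.mpr fun a _ hΦ hΨ => hne (eq_of_delta hΦ hΨ)]
  congr 1
  ext a
  simp only [mem_filter, mem_biUnion, mem_univ, true_and]
  constructor
  · rintro ⟨ha, hS⟩
    obtain ⟨Φ, hΦ⟩ := exists_delta a
    exact ⟨Φ, (solves_iff_eval hΦ).mpr hS, ha, hΦ⟩
  · rintro ⟨Φ, hS, ha, hΦ⟩
    exact ⟨ha, (solves_iff_eval hΦ).mp hS⟩

end OSP

/-- `χ_S(k) = Σ_{i=1}^n f_i · C(k,i)` where `f_i` counts ordered set partitions
with `i` blocks solving `S`; the coefficients are non-negative integers (they live in `ℕ`). -/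
theorem schedCount_eq_sum_binomial {n : ℕ} (S : SForm n) (k : ℕ) :
    schedCount S k =
      ∑ i ∈ Finset.Icc 1 n,
        {Φ : OSP n | Φ.length = i ∧ Φ.solves S}.ncard * k.choose i := by
  classical
  -- for `n = 0` the right-hand side is an empty sum, but there are no formulas on no items
  obtain rfl | hn := n.eq_zero_or_pos
  · exact isEmptyElim S
  calc schedCount S k
      = ∑ Φ : OSP n with Φ.solves S, k.choose Φ.length := by
        rw [schedCount, OSP.card_filter_eval_eq_sum]
        refine sum_congr rfl fun Φ _ => ?_
        rw [OSP.card_filter_delta, Nat.card_Icc, Nat.add_sub_cancel]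
    _ = ∑ i ∈ Icc 1 n, ∑ Φ : OSP n with Φ.length = i ∧ Φ.solves S, k.choose i := by
        rw [← sum_fiberwise_of_maps_to fun Φ _ => Φ.length_mem_Icc hn]
        refine sum_congr rfl fun i _ => ?_
        rw [filter_filter]
        exact sum_congr (filter_congr fun Φ _ => and_comm) fun Φ hΦ => by
          rw [(mem_filter.mp hΦ).2.1]
    _ = _ := by
        refine sum_congr rfl fun i _ => ?_
        rw [sum_const, smul_eq_mul, ← Set.ncard_coe_finset, coe_filter]
        simp only [mem_univ, true_and]
end
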